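/- arXiv:1709.05891 — 2 statements merged into one kernel-verified Lean document; each statement's English description precedes it below -/
import Mathlib

section
/- Let T be the tree obtained from the rooted binary tree T₀ (one vertex of degree 2, all others of degree 3) by attaching a non-trivial finite path at the root. Then no self-embedding of T is hyperbolic. -/
open SimpleGraph

variable {V : Type*}

/-- `g` is a self-embedding of `G`: injective and adjacency-preserving. -/
def IsEmb (G : SimpleGraph V) (g : V → V) : Prop :=
  Function.Injective g ∧ ∀ u v : V, G.Adj u v → G.Adj (g u) (g v)

/-- A ray in `G`: a one-way infinite path. -/
structure GRay (G : SimpleGraph V) where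
  f : ℕ → V
  inj : Function.Injective f
  adj : ∀ n, G.Adj (f n) (f (n + 1))

/-- Two rays are equivalent (lie in the same end): for every vertex `v` they have
tails avoiding `v` lying in the same component of `G − v`. -/
def RayEquiv (G : SimpleGraph V) (R S : GRay G) : Prop :=
  ∀ v : V, ∃ m n : ℕ, (∀ i, m ≤ i → R.f i ≠ v) ∧ (∀ j, n ≤ j → S.f j ≠ v) ∧
    ∃ w : G.Walk (R.f m) (S.f n), v ∉ w.support

/-- `g` fixes the end represented by the ray `R`: the image ray is equivalent to `R`. -/
def FixesEnd (G : SimpleGraph V) (g : V → V) (R : GRay G) : Prop :=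
  ∃ S : GRay G, (∀ n, S.f n = g (R.f n)) ∧ RayEquiv G S R

def FixesVertex (g : V → V) : Prop := ∃ v, g v = v

/-- `g` fixes an edge setwise (possibly swapping its endpoints). -/
def FixesEdge (G : SimpleGraph V) (g : V → V) : Prop :=
  ∃ u v : V, G.Adj u v ∧ ((g u = u ∧ g v = v) ∨ (g u = v ∧ g v = u))

/-- `g` fixes setwise a non-empty finite subtree of `G`. -/
def FixesFiniteSubtree (G : SimpleGraph V) (g : V → V) : Prop :=
  ∃ S : Set V, S.Nonempty ∧ S.Finite ∧ (G.induce S).Connected ∧ g '' S = S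

/-- `R` is a ray with `g(R) ⊆ R`; for non-elliptic `g` its end is the direction `g⁺`. -/
def DirectionRay (G : SimpleGraph V) (g : V → V) (R : GRay G) : Prop :=
  ∀ n, ∃ m, g (R.f n) = R.f m

/-- `w` lies in the component of `G − x` containing the end of `R`. -/
def InComp (G : SimpleGraph V) (x : V) (R : GRay G) (w : V) : Prop :=
  ∃ m, (∀ i, m ≤ i → R.f i ≠ x) ∧ ∃ p : G.Walk w (R.f m), x ∉ p.support

/-- A sequence of vertices converges to the end represented by `R`. -/
def ConvergesTo (G : SimpleGraph V) (x : ℕ → V) (R : GRay G) : Prop :=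
  ∀ v : V, ∃ N : ℕ, ∀ n, N ≤ n → InComp G v R (x n)

/-- `M` is a submonoid of `Emb(G)`. -/
def IsEmbMonoid (G : SimpleGraph V) (M : Set (V → V)) : Prop :=
  (∀ g ∈ M, IsEmb G g) ∧ (id ∈ M) ∧ ∀ g ∈ M, ∀ h ∈ M, (g ∘ h) ∈ M

/-- The end of `R` is an accumulation point of the orbit of `v0` under `M`:
every basic neighbourhood of the end of `R` meets the orbit. -/
def InLimitSet (G : SimpleGraph V) (M : Set (V → V)) (v0 : V) (R : GRay G) : Prop :=
  ∀ x : V, ∃ g ∈ M, InComp G x R (g v0)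

/-- A self-embedding is elliptic if it fixes a vertex or an edge. -/
def Elliptic (G : SimpleGraph V) (g : V → V) : Prop := FixesVertex g ∨ FixesEdge G g

/-- `g` is hyperbolic: not elliptic and it fixes exactly two ends. -/
def Hyperbolic (G : SimpleGraph V) (g : V → V) : Prop :=
  ¬ Elliptic G g ∧ ∃ R1 R2 : GRay G, ¬ RayEquiv G R1 R2 ∧
    FixesEnd G g R1 ∧ FixesEnd G g R2 ∧
    ∀ S : GRay G, FixesEnd G g S → RayEquiv G S R1 ∨ RayEquiv G S R2

/-- `g` is parabolic: not elliptic and it fixes exactly one end. -/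
def Parabolic (G : SimpleGraph V) (g : V → V) : Prop :=
  ¬ Elliptic G g ∧ ∃ R : GRay G, FixesEnd G g R ∧
    ∀ S : GRay G, FixesEnd G g S → RayEquiv G S R

/-- Adjacency generating relation for the rooted binary tree (on `List Bool`, root `[]`)
with a path on `k + 1` further vertices attached at the root. -/
def relT (k : ℕ) : (List Bool ⊕ Fin (k + 1)) → (List Bool ⊕ Fin (k + 1)) → Prop
  | Sum.inl s, Sum.inl t => ∃ b, t = b :: s
  | Sum.inl s, Sum.inr i => s = [] ∧ (i : ℕ) = 0
  | Sum.inr i, Sum.inr j => (j : ℕ) = (i : ℕ) + 1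
  | _, _ => False

/-- The rooted binary tree with a non-trivial finite path attached at the root. -/
def TExample (k : ℕ) : SimpleGraph (List Bool ⊕ Fin (k + 1)) := SimpleGraph.fromRel (relT k)

/-!
A self-embedding `g` without fixed vertex sends every vertex of the binary tree to a strictly
deeper one. Indeed, the vertices of the binary tree are the ones of degree 3, so `g` maps them to
each other and is bijective on their neighbourhoods. If `g (inl s) = inl u` with `u` not longer
than `s`, lifting the path from `inl u` to the root step by step gives a preimage `inl w` of the
root, and the preimage of its neighbour `inr 0`, a neighbour of `inl w`, can only be `inr 0`.

Every ray eventually descends a branch of the binary tree. If `g` fixed two inequivalent ends,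
their branches would split at a vertex `inl a`, which separates deep vertices `x`, `y` of the two
rays. But the path from `x` to `y` stays below `inl a`, so its image avoids `inl a`, and as the
ends are fixed, `g x` and `g y` lie in the components of `T - inl a` containing `x` and `y`.
-/

open Filter

theorem List.exists_cons_suffix_of_not_suffix {α : Type*} :
    ∀ {u w : List α}, ¬ u <:+ w → ¬ w <:+ u →
      ∃ a b₁ b₂, b₁ ≠ b₂ ∧ b₁ :: a <:+ u ∧ b₂ :: a <:+ w
  | [], _, huw, _ => (huw List.nil_suffix).elim
  | x :: u, w, huw, hwu => by
    by_cases hu : u <:+ w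
    · obtain ⟨t, rfl⟩ := hu
      rcases t.eq_nil_or_concat with rfl | ⟨t, y, rfl⟩
      · exact (hwu (List.suffix_cons x u)).elim
      refine ⟨u, x, y, fun hxy => huw ?_, List.suffix_rfl, ?_⟩
      · subst hxy; simp
      · simp
    · obtain ⟨a, b₁, b₂, hb, h₁, h₂⟩ := List.exists_cons_suffix_of_not_suffix hu
        fun h => hwu (h.trans (List.suffix_cons x u))
      exact ⟨a, b₁, b₂, hb, h₁.trans (List.suffix_cons x u), h₂⟩

section General

variable {G : SimpleGraph V}

def ReachableAvoiding (G : SimpleGraph V) (v x y : V) : Prop :=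
  ∃ w : G.Walk x y, v ∉ w.support

namespace ReachableAvoiding

variable {v x y z : V}

theorem symm (h : ReachableAvoiding G v x y) : ReachableAvoiding G v y x := by
  obtain ⟨w, hw⟩ := h
  exact ⟨w.reverse, by simpa using hw⟩

theorem trans (h₁ : ReachableAvoiding G v x y) (h₂ : ReachableAvoiding G v y z) :
    ReachableAvoiding G v x z := by
  obtain ⟨w₁, hw₁⟩ := h₁
  obtain ⟨w₂, hw₂⟩ := h₂
  exact ⟨w₁.append w₂, by simp [Walk.mem_support_append_iff, hw₁, hw₂]⟩

theorem of_walk_map {W : Type*} {H : SimpleGraph W} (f : G →g H) {w : W} (p : G.Walk x y)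
    (hp : ∀ u ∈ p.support, f u ≠ w) : ReachableAvoiding H w (f x) (f y) :=
  ⟨p.map f, by simpa [Walk.support_map] using hp⟩

end ReachableAvoiding

namespace GRay

theorem eventually_ne (R : GRay G) (v : V) : ∀ᶠ n in atTop, R.f n ≠ v :=
  Nat.cofinite_eq_atTop ▸ R.inj.tendsto_cofinite.eventually (eventually_cofinite_ne v)

theorem reachableAvoiding {R : GRay G} {v : V} {m n : ℕ} (hv : ∀ i, m ≤ i → R.f i ≠ v)
    (hmn : m ≤ n) : ReachableAvoiding G v (R.f m) (R.f n) := by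
  induction n, hmn using Nat.le_induction with
  | base => exact ⟨.nil, by simpa using (hv m le_rfl).symm⟩
  | succ n hmn ih =>
    obtain ⟨w, hw⟩ := ih
    exact ⟨w.concat (R.adj n), by simp [Walk.support_concat, hw, (hv (n + 1) (by omega)).symm]⟩

theorem eventually_lt_succ (R : GRay G) (h : V → ℕ) (hadj : ∀ x y, G.Adj x y → h x ≠ h y)
    (hlow : ∀ x y z, G.Adj x y → G.Adj x z → h y < h x → h z < h x → y = z) :
    ∀ᶠ n in atTop, h (R.f n) < h (R.f (n + 1)) := by
  obtain ⟨n₀, hn₀⟩ := WellFounded.not_rel_apply_succ (r := (· < ·)) (h ∘ R.f)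
  refine eventually_atTop.2 ⟨n₀, fun n hn => ?_⟩
  induction n, hn using Nat.le_induction with
  | base => exact lt_of_le_of_ne (not_lt.1 hn₀) (hadj _ _ (R.adj n₀))
  | succ n _ ih =>
    -- a descent right after an ascent would revisit a vertex
    refine lt_of_le_of_ne (not_lt.1 fun hlt => ?_) (hadj _ _ (R.adj (n + 1)))
    have := R.inj (hlow _ _ _ (R.adj (n + 1)) (R.adj n).symm hlt ih)
    omega

end GRay

theorem RayEquiv.eventually_reachableAvoiding {R S : GRay G} (h : RayEquiv G R S) (v : V) :
    ∀ᶠ n in atTop, ReachableAvoiding G v (R.f n) (S.f n) := by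
  obtain ⟨m, n, hR, hS, w, hw⟩ := h v
  refine eventually_atTop.2 ⟨max m n, fun N hN => ?_⟩
  exact ((GRay.reachableAvoiding hR (le_of_max_le_left hN)).symm.trans ⟨w, hw⟩).trans
    (GRay.reachableAvoiding hS (le_of_max_le_right hN))

theorem FixesEnd.eventually_reachableAvoiding {g : V → V} {R : GRay G} (h : FixesEnd G g R)
    (v : V) : ∀ᶠ n in atTop, ReachableAvoiding G v (g (R.f n)) (R.f n) := by
  obtain ⟨S, hS, hSR⟩ := h
  simpa only [hS] using hSR.eventually_reachableAvoiding v

namespace IsEmb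

variable {g : V → V}

theorem image_neighborSet (hg : IsEmb G g) {x : V} (hfin : (G.neighborSet (g x)).Finite)
    (hle : (G.neighborSet (g x)).ncard ≤ (G.neighborSet x).ncard) :
    g '' G.neighborSet x = G.neighborSet (g x) :=
  Set.eq_of_subset_of_ncard_le (Set.image_subset_iff.2 fun _ hy => hg.2 _ _ hy)
    (by rwa [Set.ncard_image_of_injective _ hg.1]) hfin

theorem ncard_neighborSet_le (hg : IsEmb G g) {x : V} (hfin : (G.neighborSet (g x)).Finite) :
    (G.neighborSet x).ncard ≤ (G.neighborSet (g x)).ncard :=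
  Set.ncard_le_ncard_of_injOn g (fun _ hy => hg.2 _ _ hy) hg.1.injOn hfin

end IsEmb

end General

namespace TExample

variable {k : ℕ}

@[simp]
theorem adj_inl_inl {s t : List Bool} :
    (TExample k).Adj (.inl s) (.inl t) ↔ (∃ b, t = b :: s) ∨ ∃ b, s = b :: t := by
  simp only [TExample, fromRel_adj, relT, ne_eq, Sum.inl.injEq]
  constructor
  · exact fun h => h.2
  · rintro (⟨b, rfl⟩ | ⟨b, rfl⟩) <;> simp

@[simp]
theorem adj_inl_inr {s : List Bool} {i : Fin (k + 1)} :
    (TExample k).Adj (.inl s) (.inr i) ↔ s = [] ∧ i = 0 := by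
  simp [TExample, relT, Fin.val_eq_zero_iff]

@[simp]
theorem adj_inr_inl {s : List Bool} {i : Fin (k + 1)} :
    (TExample k).Adj (.inr i) (.inl s) ↔ s = [] ∧ i = 0 := by
  simp [TExample, relT, Fin.val_eq_zero_iff]

@[simp]
theorem adj_inr_inr {i j : Fin (k + 1)} :
    (TExample k).Adj (.inr i) (.inr j) ↔ (j : ℕ) = i + 1 ∨ (i : ℕ) = j + 1 := by
  simp only [TExample, fromRel_adj, relT, ne_eq, Sum.inr.injEq, Fin.ext_iff]
  omega

/-- The neighbour towards `inr k`; at `inr k` itself `i + 1` wraps around to a junk value. -/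
def parent (k : ℕ) : List Bool ⊕ Fin (k + 1) → List Bool ⊕ Fin (k + 1)
  | .inl [] => .inr 0
  | .inl (_ :: t) => .inl t
  | .inr i => .inr (i + 1)

theorem neighborSet_inl (s : List Bool) :
    (TExample k).neighborSet (.inl s) =
      {.inl (true :: s), .inl (false :: s), parent k (.inl s)} := by
  ext (t | i)
  · simp only [mem_neighborSet, adj_inl_inl, Set.mem_insert_iff, Set.mem_singleton_iff,
      Sum.inl.injEq]
    constructor
    · rintro (⟨b, rfl⟩ | ⟨b, rfl⟩)
      · cases b <;> simp
      · simp [parent]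
    · rcases s with _ | ⟨c, s⟩ <;> rintro (rfl | rfl | h) <;> simp_all [parent]
  · cases s <;> simp [parent, eq_comm]

theorem ncard_neighborSet_inl (s : List Bool) :
    ((TExample k).neighborSet (.inl s)).ncard = 3 := by
  have hne : ∀ b, parent k (.inl s) ≠ .inl (b :: s) := by
    rintro b h
    cases s <;> simp only [parent, reduceCtorEq, Sum.inl.injEq] at h
    have := congrArg List.length h
    simp only [List.length_cons] at this
    omega
  rw [neighborSet_inl, Set.ncard_insert_of_notMem, Set.ncard_pair (hne false).symm]
  simp [(hne true).symm]

-- `i - 1` and `i + 1` wrap around in `Fin (k + 1)`, which only enlarges the right-hand side.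
theorem neighborSet_inr_subset (i : Fin (k + 1)) :
    (TExample k).neighborSet (.inr i) ⊆
      {if i = 0 then .inl [] else .inr (i - 1), .inr (i + 1)} := by
  rintro (s | j) h
  · obtain ⟨rfl, rfl⟩ := adj_inr_inl.1 h
    simp
  · rcases adj_inr_inr.1 h with h | h
    · right
      simp only [Set.mem_singleton_iff, Sum.inr.injEq, Fin.ext_iff]
      rw [Fin.val_add_one_of_lt' (by omega)]
      exact h
    · left
      have hi : i ≠ 0 := by rw [Ne, Fin.ext_iff, Fin.val_zero]; omega
      simp only [hi, if_false, Sum.inr.injEq, Fin.ext_iff, Fin.val_sub_one_of_ne_zero hi]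
      omega

theorem ncard_neighborSet_inr_le (i : Fin (k + 1)) :
    ((TExample k).neighborSet (.inr i)).ncard ≤ 2 :=
  (Set.ncard_le_ncard (neighborSet_inr_subset i)).trans <|
    (Set.ncard_insert_le _ _).trans (by rw [Set.ncard_singleton])

variable {g : List Bool ⊕ Fin (k + 1) → List Bool ⊕ Fin (k + 1)}

theorem exists_map_inl (hg : IsEmb (TExample k) g) (s : List Bool) :
    ∃ u, g (.inl s) = .inl u := by
  rcases hgs : g (.inl s) with u | i
  · exact ⟨u, rfl⟩
  · have hle := hg.ncard_neighborSet_le (x := .inl s)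
      (hgs ▸ (Set.toFinite _).subset (neighborSet_inr_subset i))
    rw [ncard_neighborSet_inl, hgs] at hle
    exact absurd (hle.trans (ncard_neighborSet_inr_le i)) (by norm_num)

theorem exists_adj_map_eq (hg : IsEmb (TExample k) g) {s u : List Bool}
    (h : g (.inl s) = .inl u) {p : List Bool ⊕ Fin (k + 1)} (hp : (TExample k).Adj (.inl u) p) :
    ∃ q, (TExample k).Adj (.inl s) q ∧ g q = p := by
  have himg := hg.image_neighborSet (x := .inl s)
    (by rw [h, neighborSet_inl]; exact Set.toFinite _)
    (by rw [h, ncard_neighborSet_inl, ncard_neighborSet_inl])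
  rw [h] at himg
  rwa [← mem_neighborSet, ← himg] at hp

theorem exists_map_eq_nil (hg : IsEmb (TExample k) g) :
    ∀ {u s : List Bool}, g (.inl s) = .inl u → u.length ≤ s.length →
      ∃ w, g (.inl w) = .inl []
  | [], s, h, _ => ⟨s, h⟩
  | b :: u, s, h, hl => by
    obtain ⟨q, hq, hgq⟩ := exists_adj_map_eq hg h (adj_inl_inl.2 (Or.inr ⟨b, rfl⟩))
    rcases q with t | i
    · refine exists_map_eq_nil hg hgq ?_
      rcases adj_inl_inl.1 hq with ⟨c, rfl⟩ | ⟨c, rfl⟩ <;>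
        simp only [List.length_cons] at hl ⊢ <;> omega
    · obtain ⟨rfl, -⟩ := adj_inl_inr.1 hq
      simp at hl

theorem length_lt_of_map_eq (hg : IsEmb (TExample k) g) (hnf : ¬ FixesVertex g)
    {s u : List Bool} (h : g (.inl s) = .inl u) : s.length < u.length := by
  by_contra! hl
  obtain ⟨w, hw⟩ := exists_map_eq_nil hg h hl
  obtain ⟨q, hq, hgq⟩ := exists_adj_map_eq hg hw (adj_inl_inr.2 ⟨rfl, rfl⟩)
  rcases q with t | i
  · obtain ⟨u', hu'⟩ := exists_map_inl hg t
    simp [hu'] at hgq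
  · obtain ⟨-, rfl⟩ := adj_inl_inr.1 hq
    exact hnf ⟨_, hgq⟩

/-- Distance from the far end `inr k` of the attached path. -/
def height (k : ℕ) : List Bool ⊕ Fin (k + 1) → ℕ
  | .inl s => s.length + k + 1
  | .inr i => k - i

theorem height_ne_of_adj {x y : List Bool ⊕ Fin (k + 1)} (h : (TExample k).Adj x y) :
    height k x ≠ height k y := by
  rcases x with s | i <;> rcases y with t | j
  · rcases adj_inl_inl.1 h with ⟨b, rfl⟩ | ⟨b, rfl⟩ <;> simp [height]
  · obtain ⟨rfl, rfl⟩ := adj_inl_inr.1 h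
    simp [height]
  · obtain ⟨rfl, rfl⟩ := adj_inr_inl.1 h
    simp [height]
  · have := j.isLt
    have := i.isLt
    simp only [adj_inr_inr] at h
    simp only [height]
    omega

theorem eq_parent_of_adj_of_height_lt {x y : List Bool ⊕ Fin (k + 1)}
    (h : (TExample k).Adj x y) (hyx : height k y < height k x) : y = parent k x := by
  rcases x with s | i <;> rcases y with t | j
  · rcases adj_inl_inl.1 h with ⟨b, rfl⟩ | ⟨b, rfl⟩
    · simp [height] at hyx
    · rfl
  · obtain ⟨rfl, rfl⟩ := adj_inl_inr.1 h
    rfl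
  · obtain ⟨rfl, rfl⟩ := adj_inr_inl.1 h
    simp [height] at hyx
  · simp only [height] at hyx
    have := i.isLt
    have := j.isLt
    simp only [parent, Sum.inr.injEq, Fin.ext_iff]
    rw [Fin.val_add_one_of_lt' (by omega)]
    simp only [adj_inr_inr] at h
    omega

/-- `x` lies in the subtree of the binary tree rooted at `inl p`. -/
def IsBelow (p : List Bool) : List Bool ⊕ Fin (k + 1) → Prop
  | .inl s => p <:+ s
  | .inr _ => False

namespace IsBelow

variable {p : List Bool} {x y : List Bool ⊕ Fin (k + 1)}

@[simp]
theorem inl_iff {s : List Bool} : IsBelow p (.inl s : List Bool ⊕ Fin (k + 1)) ↔ p <:+ s :=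
  Iff.rfl

theorem mono {q : List Bool} (hqp : q <:+ p) (hx : IsBelow p x) : IsBelow q x := by
  rcases x with s | i
  · exact hqp.trans hx
  · exact hx

theorem length_lt_height (hx : IsBelow p x) : p.length < height k x := by
  rcases x with s | i
  · have := hx.length_le
    simp only [height]
    omega
  · exact hx.elim

theorem of_adj_of_height_lt (hx : IsBelow p x) (h : (TExample k).Adj x y)
    (hxy : height k x < height k y) : IsBelow p y := by
  rcases x with s | i
  · rcases y with t | j
    · rcases adj_inl_inl.1 h with ⟨b, rfl⟩ | ⟨b, rfl⟩
      · exact hx.trans (List.suffix_cons b s)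
      · simp [height] at hxy
    · obtain ⟨rfl, rfl⟩ := adj_inl_inr.1 h
      simp [height] at hxy
  · exact hx.elim

theorem of_adj_of_ne {a : List Bool} {b : Bool} (hx : IsBelow (b :: a) x)
    (h : (TExample k).Adj x y) (hy : y ≠ .inl a) : IsBelow (b :: a) y := by
  rcases x with s | i
  · rcases y with t | j
    · rcases adj_inl_inl.1 h with ⟨c, rfl⟩ | ⟨c, rfl⟩
      · exact hx.trans (List.suffix_cons c s)
      · rcases List.suffix_cons_iff.1 hx with h' | h'
        · exact absurd (by simp_all) hy
        · exact h'
    · obtain ⟨rfl, rfl⟩ := adj_inl_inr.1 h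
      simp at hx
  · exact hx.elim

theorem of_reachableAvoiding {a : List Bool} {b : Bool} (hx : IsBelow (b :: a) x)
    (h : ReachableAvoiding (TExample k) (.inl a) x y) : IsBelow (b :: a) y := by
  obtain ⟨w, hw⟩ := h
  induction w with
  | nil => exact hx
  | cons hadj w ih =>
    simp only [Walk.support_cons, List.mem_cons, not_or] at hw
    exact ih (hx.of_adj_of_ne hadj fun h => hw.2 (h ▸ w.start_mem_support)) hw.2

theorem eq_of_cons {a : List Bool} {b₁ b₂ : Bool} (h₁ : IsBelow (b₁ :: a) x)
    (h₂ : IsBelow (b₂ :: a) x) : b₁ = b₂ := by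
  rcases x with s | i
  · have := List.suffix_of_suffix_length_le h₁ h₂ (by simp)
    simpa using this.eq_of_length (by simp)
  · exact h₁.elim

end IsBelow

theorem exists_walk_isBelow_of_append (p : List Bool) :
    ∀ c : List Bool,
      ∃ w : (TExample k).Walk (.inl (c ++ p)) (.inl p), ∀ z ∈ w.support, IsBelow p z
  | [] => ⟨.nil, by simp⟩
  | b :: c => by
    obtain ⟨w, hw⟩ := exists_walk_isBelow_of_append p c
    refine ⟨.cons (adj_inl_inl.2 (Or.inr ⟨b, rfl⟩)) w, ?_⟩
    simpa [List.suffix_append] using hw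

theorem exists_walk_isBelow {p : List Bool} {x y : List Bool ⊕ Fin (k + 1)} (hx : IsBelow p x)
    (hy : IsBelow p y) : ∃ w : (TExample k).Walk x y, ∀ z ∈ w.support, IsBelow p z := by
  rcases x with s | i
  · rcases y with t | j
    · obtain ⟨c, rfl⟩ := hx
      obtain ⟨d, rfl⟩ := hy
      obtain ⟨w₁, hw₁⟩ := exists_walk_isBelow_of_append p c
      obtain ⟨w₂, hw₂⟩ := exists_walk_isBelow_of_append p d
      refine ⟨w₁.append w₂.reverse, fun z hz => ?_⟩
      rw [Walk.mem_support_append_iff, Walk.support_reverse, List.mem_reverse] at hz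
      exact hz.elim (hw₁ z) (hw₂ z)
    · exact hy.elim
  · exact hx.elim

theorem map_ne_inl_of_isBelow (hg : IsEmb (TExample k) g) (hnf : ¬ FixesVertex g)
    {a : List Bool} {z : List Bool ⊕ Fin (k + 1)} (hz : IsBelow a z) : g z ≠ .inl a := by
  rcases z with s | i
  · obtain ⟨u, hu⟩ := exists_map_inl hg s
    have := length_lt_of_map_eq hg hnf hu
    have := hz.length_le
    rw [hu]
    rintro ⟨⟩
    omega
  · exact hz.elim

theorem exists_eventually_isBelow (R : GRay (TExample k)) (L : ℕ) :
    ∃ p : List Bool, L ≤ p.length ∧ ∀ᶠ n in atTop, IsBelow p (R.f n) := by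
  obtain ⟨N, hN⟩ := eventually_atTop.1 <| R.eventually_lt_succ (height k)
    (fun _ _ => height_ne_of_adj) fun _ _ _ hy hz hyx hzx =>
      (eq_parent_of_adj_of_height_lt hy hyx).trans (eq_parent_of_adj_of_height_lt hz hzx).symm
  have hdeep : L + k + 1 ≤ height k (R.f (N + (L + k + 1))) :=
    (strictMono_nat_of_lt_succ fun j => hN (N + j) (by omega)).id_le _
  rcases hx : R.f (N + (L + k + 1)) with p | i
  · rw [hx] at hdeep
    refine ⟨p, by simp only [height] at hdeep; omega,
      eventually_atTop.2 ⟨N + (L + k + 1), fun n hn => ?_⟩⟩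
    induction n, hn using Nat.le_induction with
    | base => simp [hx]
    | succ n hn ih => exact ih.of_adj_of_height_lt (R.adj n) (hN n (by omega))
  · rw [hx] at hdeep
    simp only [height] at hdeep
    omega

theorem rayEquiv_of_forall_isBelow {R S : GRay (TExample k)}
    (h : ∀ p, (∀ᶠ n in atTop, IsBelow p (R.f n)) → ∀ᶠ n in atTop, IsBelow p (S.f n)) :
    RayEquiv (TExample k) R S := by
  intro v
  obtain ⟨p, hp, hR⟩ := exists_eventually_isBelow R (height k v)
  obtain ⟨m, hm⟩ := eventually_atTop.1 ((R.eventually_ne v).and hR)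
  obtain ⟨n, hn⟩ := eventually_atTop.1 ((S.eventually_ne v).and (h p hR))
  obtain ⟨w, hw⟩ := exists_walk_isBelow (hm m le_rfl).2 (hn n le_rfl).2
  exact ⟨m, n, fun i hi => (hm i hi).1, fun j hj => (hn j hj).1, w,
    fun hv => (hw v hv).length_lt_height.not_ge hp⟩

theorem exists_cons_isBelow_of_not_rayEquiv {R S : GRay (TExample k)}
    (h : ¬ RayEquiv (TExample k) R S) :
    ∃ a b₁ b₂, b₁ ≠ b₂ ∧ (∀ᶠ n in atTop, IsBelow (b₁ :: a) (R.f n)) ∧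
      ∀ᶠ n in atTop, IsBelow (b₂ :: a) (S.f n) := by
  obtain ⟨p, hR, hS⟩ : ∃ p, (∀ᶠ n in atTop, IsBelow p (R.f n)) ∧
      ¬ ∀ᶠ n in atTop, IsBelow p (S.f n) := by
    by_contra! h'
    exact h (rayEquiv_of_forall_isBelow h')
  obtain ⟨q, hq, hSq⟩ := exists_eventually_isBelow S p.length
  obtain ⟨a, b₁, b₂, hb, h₁, h₂⟩ := List.exists_cons_suffix_of_not_suffix
    (fun hpq => hS (hSq.mono fun _ => IsBelow.mono hpq))
    (fun hqp => hS (hqp.eq_of_length_le hq ▸ hSq))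
  exact ⟨a, b₁, b₂, hb, hR.mono fun _ => IsBelow.mono h₁,
    hSq.mono fun _ => IsBelow.mono h₂⟩

end TExample

theorem stmt14_general (k : ℕ)
    (g : (List Bool ⊕ Fin (k + 1)) → (List Bool ⊕ Fin (k + 1)))
    (hg : IsEmb (TExample k) g) : ¬ Hyperbolic (TExample k) g := by
  rintro ⟨hne, R₁, R₂, hR, hF₁, hF₂, -⟩
  have hnf : ¬ FixesVertex g := fun h => hne (Or.inl h)
  obtain ⟨a, b₁, b₂, hb, h₁, h₂⟩ := TExample.exists_cons_isBelow_of_not_rayEquiv hR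
  obtain ⟨n, hx, hy, hgx, hgy⟩ := (h₁.and <| h₂.and <|
    (hF₁.eventually_reachableAvoiding (.inl a)).and
      (hF₂.eventually_reachableAvoiding (.inl a))).exists
  obtain ⟨P, hP⟩ := TExample.exists_walk_isBelow (hx.mono (List.suffix_cons b₁ a))
    (hy.mono (List.suffix_cons b₂ a))
  have hgP : ReachableAvoiding (TExample k) (.inl a) (g (R₁.f n)) (g (R₂.f n)) :=
    .of_walk_map ⟨g, hg.2 _ _⟩ P fun z hz => TExample.map_ne_inl_of_isBelow hg hnf (hP z hz)
  have hxy : ReachableAvoiding (TExample k) (.inl a) (R₁.f n) (R₂.f n) :=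
    (hgx.symm.trans hgP).trans hgy
  exact hb ((hx.of_reachableAvoiding hxy).eq_of_cons hy)

theorem stmt14 (k : ℕ) (hk : 1 ≤ k)
    (g : (List Bool ⊕ Fin (k + 1)) → (List Bool ⊕ Fin (k + 1)))
    (hg : IsEmb (TExample k) g) : ¬ Hyperbolic (TExample k) g :=
  stmt14_general k g hg
end

section
/- Let T be a tree and M a submonoid of Emb(T). If the limit set L(M) has at least two elements and some end of T is fixed by every element of M, then M contains a hyperbolic self-embedding. -/
open SimpleGraph

variable {V : Type*}

/-!
Let `ω` be the end fixed by `M` and `β` its Busemann function, computed along a ray `R₀` in `ω`.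
In a tree, equivalent rays share a tail, so each `g ∈ M` eventually shifts `R₀` along itself and
`β ∘ g = β + c` for a constant `c`. If `c < 0` for some `g`, the `g`-images of a segment of `R₀`
line up into an axis along which `g` translates away from `ω`; such a `g` fixes no vertex or edge,
and its fixed ends are exactly `ω` and the end of the axis. Otherwise `β` does not decrease along
the orbit of `v0`. But `β` tends to `-∞` along every ray outside `ω`, and a vertex in the
component of `T - x` containing such a ray, for `x` far along it, has `β` at most `β x`; so no end
other than `ω` is a limit point.
-/

open Filter

namespace SimpleGraph.IsTree

variable {G : SimpleGraph V}

noncomputable def geodesic (hT : G.IsTree) (u v : V) : G.Walk u v :=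
  (hT.existsUnique_path u v).choose

lemma isPath_geodesic (hT : G.IsTree) (u v : V) : (hT.geodesic u v).IsPath :=
  (hT.existsUnique_path u v).choose_spec.1

lemma eq_geodesic (hT : G.IsTree) {u v : V} {p : G.Walk u v} (hp : p.IsPath) :
    p = hT.geodesic u v :=
  (hT.existsUnique_path u v).choose_spec.2 p hp

lemma length_eq_dist_of_isPath (hT : G.IsTree) {u v : V} {p : G.Walk u v} (hp : p.IsPath) :
    p.length = G.dist u v := by
  obtain ⟨q, hq, hlen⟩ := hT.connected.exists_path_of_dist u v
  rw [hT.eq_geodesic hp, ← hT.eq_geodesic hq, hlen]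

lemma support_geodesic_subset (hT : G.IsTree) {u v : V} (p : G.Walk u v) :
    (hT.geodesic u v).support ⊆ p.support := by
  classical
  rw [← hT.eq_geodesic p.bypass_isPath]
  exact p.support_bypass_subset_support

lemma mem_support_geodesic_iff (hT : G.IsTree) {u v x : V} :
    x ∈ (hT.geodesic u v).support ↔ G.dist u v = G.dist u x + G.dist x v := by
  classical
  constructor
  · intro hx
    have hp := hT.isPath_geodesic u v
    rw [← hT.length_eq_dist_of_isPath hp, ← (hT.geodesic u v).take_spec hx, Walk.length_append,
      hT.length_eq_dist_of_isPath (hp.takeUntil hx), hT.length_eq_dist_of_isPath (hp.dropUntil hx)]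
  · intro hd
    obtain ⟨p, -, hplen⟩ := hT.connected.exists_path_of_dist u x
    obtain ⟨q, -, hqlen⟩ := hT.connected.exists_path_of_dist x v
    have hpath : (p.append q).IsPath :=
      (p.append q).isPath_of_length_eq_dist (by rw [Walk.length_append, hplen, hqlen, hd])
    rw [← hT.eq_geodesic hpath, Walk.mem_support_append_iff]
    exact Or.inl p.end_mem_support

lemma mem_support_of_dist_eq (hT : G.IsTree) {u v x : V} (p : G.Walk u v)
    (h : G.dist u v = G.dist u x + G.dist x v) : x ∈ p.support :=
  hT.support_geodesic_subset p (hT.mem_support_geodesic_iff.2 h)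

lemma eq_of_adj_of_dist_eq_add_one (hT : G.IsTree) {z w u₁ u₂ : V} (h₁ : G.Adj w u₁)
    (h₂ : G.Adj w u₂) (hd₁ : G.dist z w = G.dist z u₁ + 1) (hd₂ : G.dist z w = G.dist z u₂ + 1) :
    u₁ = u₂ := by
  have hp := hT.isPath_geodesic z w
  have hmem : ∀ {u}, G.Adj w u → G.dist z w = G.dist z u + 1 → u ∈ (hT.geodesic z w).support :=
    fun hu hd => hT.mem_support_geodesic_iff.2 (by rw [hd, dist_eq_one_iff_adj.2 hu.symm])
  rw [hT.isAcyclic.eq_penultimate_of_adj_end hp h₁ (hmem h₁ hd₁),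
    hT.isAcyclic.eq_penultimate_of_adj_end hp h₂ (hmem h₂ hd₂)]

end SimpleGraph.IsTree

namespace IsEmb

variable {G : SimpleGraph V} {g : V → V}

lemma iterate (hg : IsEmb G g) : ∀ n, IsEmb G g^[n]
  | 0 => ⟨Function.injective_id, fun _ _ h => h⟩
  | n + 1 => ⟨hg.1.iterate (n + 1), fun u v h => by
      simpa only [Function.iterate_succ_apply'] using hg.2 _ _ ((hg.iterate n).2 u v h)⟩

def toHom (hg : IsEmb G g) : G →g G := ⟨g, hg.2 _ _⟩

lemma dist_apply (hT : G.IsTree) (hg : IsEmb G g) (u v : V) :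
    G.dist (g u) (g v) = G.dist u v := by
  have hpath := (hT.isPath_geodesic u v).map (f := hg.toHom) hg.1
  have h := hT.length_eq_dist_of_isPath hpath
  rw [Walk.length_map, hT.length_eq_dist_of_isPath (hT.isPath_geodesic u v)] at h
  exact h.symm

end IsEmb

namespace GRay

variable {G : SimpleGraph V}

lemma ext {R S : GRay G} (h : ∀ n, R.f n = S.f n) : R = S := by
  cases R; cases S
  simp only [GRay.mk.injEq]
  exact funext h

def map (R : GRay G) {g : V → V} (hg : IsEmb G g) : GRay G where
  f n := g (R.f n)
  inj _ _ h := R.inj (hg.1 h)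
  adj n := hg.2 _ _ (R.adj n)

lemma exists_forall_ge_ne (R : GRay G) (x : V) : ∃ N, ∀ i, N ≤ i → R.f i ≠ x := by
  by_cases h : ∃ i, R.f i = x
  · obtain ⟨i₀, rfl⟩ := h
    exact ⟨i₀ + 1, fun i hi hx => by have := R.inj hx; omega⟩
  · exact ⟨0, fun i _ hx => h ⟨i, hx⟩⟩

def walkFrom (R : GRay G) (i : ℕ) : (k : ℕ) → G.Walk (R.f i) (R.f (i + k))
  | 0 => Walk.nil
  | k + 1 => (R.walkFrom i k).concat (R.adj (i + k))

lemma mem_support_walkFrom_iff (R : GRay G) {i k : ℕ} {x : V} :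
    x ∈ (R.walkFrom i k).support ↔ ∃ t ≤ k, R.f (i + t) = x := by
  induction k with
  | zero => simp [walkFrom, eq_comm]
  | succ k ih =>
    simp only [walkFrom, Walk.support_concat, List.mem_append, List.mem_singleton, ih]
    constructor
    · rintro (⟨t, ht, rfl⟩ | rfl)
      exacts [⟨t, by omega, rfl⟩, ⟨k + 1, le_rfl, rfl⟩]
    · rintro ⟨t, ht, rfl⟩
      rcases Nat.lt_or_ge t (k + 1) with h | h
      exacts [Or.inl ⟨t, by omega, rfl⟩, Or.inr (by rw [show t = k + 1 by omega])]

lemma isPath_walkFrom (R : GRay G) (i : ℕ) : ∀ k, (R.walkFrom i k).IsPath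
  | 0 => Walk.IsPath.nil
  | k + 1 => (R.isPath_walkFrom i k).concat (fun h => by
      obtain ⟨t, ht, heq⟩ := R.mem_support_walkFrom_iff.1 h
      have := R.inj heq
      omega) _

def seg (R : GRay G) (i j : ℕ) (h : i ≤ j) : G.Walk (R.f i) (R.f j) :=
  (R.walkFrom i (j - i)).copy rfl (by rw [Nat.add_sub_cancel' h])

lemma mem_support_seg_iff (R : GRay G) {i j : ℕ} (h : i ≤ j) {x : V} :
    x ∈ (R.seg i j h).support ↔ ∃ t, i ≤ t ∧ t ≤ j ∧ R.f t = x := by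
  rw [seg, Walk.support_copy, mem_support_walkFrom_iff]
  constructor
  · rintro ⟨t, ht, rfl⟩
    exact ⟨i + t, by omega, by omega, rfl⟩
  · rintro ⟨t, ht₁, ht₂, rfl⟩
    exact ⟨t - i, by omega, by rw [Nat.add_sub_cancel' ht₁]⟩

lemma dist_f_f (hT : G.IsTree) (R : GRay G) {i j : ℕ} (h : i ≤ j) :
    G.dist (R.f i) (R.f j) = j - i := by
  have hpath : (R.seg i j h).IsPath := by
    rw [seg, Walk.isPath_copy]
    exact R.isPath_walkFrom i _
  rw [← hT.length_eq_dist_of_isPath hpath, seg, Walk.length_copy]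
  clear hpath
  generalize j - i = k
  induction k with
  | zero => rfl
  | succ k ih => rw [walkFrom, Walk.length_concat, ih]

end GRay

section RayEquiv

variable {G : SimpleGraph V}

lemma RayEquiv.symm {R S : GRay G} (h : RayEquiv G R S) : RayEquiv G S R := fun v => by
  obtain ⟨m, n, hm, hn, W, hW⟩ := h v
  exact ⟨n, m, hn, hm, W.reverse, by rwa [Walk.support_reverse, List.mem_reverse]⟩

lemma RayEquiv.trans {R S T : GRay G} (h₁ : RayEquiv G R S) (h₂ : RayEquiv G S T) :
    RayEquiv G R T := fun v => by
  obtain ⟨m₁, n₁, hR, hS₁, W₁, hW₁⟩ := h₁ v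
  obtain ⟨m₂, n₂, hS₂, hT₂, W₂, hW₂⟩ := h₂ v
  refine ⟨m₁, n₂, hR, hT₂, W₁.append ((S.seg n₁ (max n₁ m₂) (le_max_left _ _)).append
    ((S.seg m₂ (max n₁ m₂) (le_max_right _ _)).reverse.append W₂)), ?_⟩
  simp only [Walk.mem_support_append_iff, Walk.support_reverse, List.mem_reverse, not_or]
  refine ⟨hW₁, fun hv => ?_, fun hv => ?_, hW₂⟩
  · obtain ⟨t, ht, -, rfl⟩ := (S.mem_support_seg_iff _).1 hv
    exact hS₁ t ht rfl
  · obtain ⟨t, ht, -, rfl⟩ := (S.mem_support_seg_iff _).1 hv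
    exact hS₂ t ht rfl

lemma RayEquiv.map {R S : GRay G} {g : V → V} (hg : IsEmb G g) (h : RayEquiv G R S) :
    RayEquiv G (R.map hg) (S.map hg) := fun v => by
  have hmap : ∀ {x y} (W : G.Walk x y), v ∉ (W.map hg.toHom).support ↔
      ∀ u ∈ W.support, g u ≠ v := fun W => by
    simp only [Walk.support_map, List.mem_map, not_exists, not_and]; rfl
  by_cases hv : ∃ u, g u = v
  · obtain ⟨u, rfl⟩ := hv
    obtain ⟨m, n, hm, hn, W, hW⟩ := h u
    refine ⟨m, n, fun i hi hx => hm i hi (hg.1 hx), fun j hj hx => hn j hj (hg.1 hx),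
      W.map hg.toHom, (hmap W).2 fun x hx hgx => hW (hg.1 hgx ▸ hx)⟩
  · push Not at hv
    obtain ⟨m, n, -, -, W, -⟩ := h v
    exact ⟨m, n, fun i _ => hv _, fun j _ => hv _, W.map hg.toHom, (hmap W).2 fun x _ => hv x⟩

lemma rayEquiv_of_f_add_eq {R S : GRay G} {p q : ℕ} (h : ∀ t, R.f (p + t) = S.f (q + t)) :
    RayEquiv G R S := fun v => by
  obtain ⟨N, hN⟩ := S.exists_forall_ge_ne v
  refine ⟨p + N, q + N, fun i hi => ?_, fun j hj => hN j (by omega), Walk.nil.copy rfl (h N), ?_⟩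
  · rw [show i = p + (i - p) by omega, h]
    exact hN _ (by omega)
  · simpa [eq_comm, h N] using hN (q + N) (by omega)

lemma FixesEnd.rayEquiv_map {g : V → V} {R : GRay G} (h : FixesEnd G g R) (hg : IsEmb G g) :
    RayEquiv G (R.map hg) R := by
  obtain ⟨S, hS, hSR⟩ := h
  rwa [GRay.ext (S := R.map hg) hS] at hSR

lemma FixesEnd.rayEquiv_map_iterate {g : V → V} {R : GRay G} (h : FixesEnd G g R)
    (hg : IsEmb G g) : ∀ n, RayEquiv G R (R.map (hg.iterate n))
  | 0 => rayEquiv_of_f_add_eq (p := 0) (q := 0) fun _ => rfl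
  | n + 1 => by
    have := (h.rayEquiv_map hg).symm.trans ((h.rayEquiv_map_iterate hg n).map hg)
    rwa [show (R.map (hg.iterate n)).map hg = R.map (hg.iterate (n + 1)) from
      GRay.ext fun i => (Function.iterate_succ_apply' g n (R.f i)).symm] at this

end RayEquiv

namespace GRay

variable {G : SimpleGraph V}

lemma exists_dist_f_succ (hT : G.IsTree) (R : GRay G) (z : V) :
    ∃ N, ∀ n, N ≤ n → G.dist z (R.f (n + 1)) = G.dist z (R.f n) + 1 := by
  have hstep (n : ℕ) := hT.dist_eq_dist_add_one_of_adj z (R.adj n)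
  -- in a tree `R.f (n + 1)` has only one neighbour closer to `z`
  have hup (n : ℕ) (h : G.dist z (R.f (n + 1)) = G.dist z (R.f n) + 1) :
      G.dist z (R.f (n + 2)) = G.dist z (R.f (n + 1)) + 1 := by
    refine (hstep (n + 1)).resolve_left fun h' => ?_
    have := R.inj (hT.eq_of_adj_of_dist_eq_add_one (R.adj n).symm (R.adj (n + 1)) h h')
    omega
  obtain ⟨n₀, hn₀⟩ : ∃ n, G.dist z (R.f (n + 1)) = G.dist z (R.f n) + 1 := by
    by_contra! hdown
    have hlin (n : ℕ) : G.dist z (R.f n) + n = G.dist z (R.f 0) := by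
      induction n with
      | zero => rfl
      | succ n ih => have := (hstep n).resolve_right (hdown n); omega
    have := hlin (G.dist z (R.f 0) + 1)
    omega
  exact ⟨n₀, fun n hn => Nat.le_induction hn₀ (fun n _ => hup n) n hn⟩

lemma exists_dist_f_eq_add (hT : G.IsTree) (R : GRay G) (z : V) :
    ∃ N, ∀ n, N ≤ n → G.dist z (R.f n) = G.dist z (R.f N) + (n - N) := by
  obtain ⟨N, hN⟩ := R.exists_dist_f_succ hT z
  refine ⟨N, fun n hn => Nat.le_induction (by simp) (fun n hn ih => ?_) n hn⟩
  rw [hN n hn, ih]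
  omega

/-- Normalised so that it increases towards the end of `R`, with `busemann (R.f k) = k`. -/
noncomputable def busemann (hT : G.IsTree) (R : GRay G) (z : V) : ℤ :=
  (R.exists_dist_f_eq_add hT z).choose - G.dist z (R.f (R.exists_dist_f_eq_add hT z).choose)

lemma eventually_sub_dist_eq_busemann (hT : G.IsTree) (R : GRay G) (z : V) :
    ∀ᶠ k : ℕ in atTop, (k : ℤ) - G.dist z (R.f k) = R.busemann hT z := by
  have hN := (R.exists_dist_f_eq_add hT z).choose_spec
  filter_upwards [eventually_ge_atTop (R.exists_dist_f_eq_add hT z).choose] with k hk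
  rw [busemann, hN k hk]
  omega

lemma sub_dist_le_busemann (hT : G.IsTree) (R : GRay G) (z : V) (k : ℕ) :
    (k : ℤ) - G.dist z (R.f k) ≤ R.busemann hT z := by
  obtain ⟨l, hl, hkl⟩ :=
    ((R.eventually_sub_dist_eq_busemann hT z).and (eventually_ge_atTop k)).exists
  have := hT.connected.dist_triangle (u := z) (v := R.f k) (w := R.f l)
  rw [R.dist_f_f hT hkl] at this
  omega

lemma busemann_f (hT : G.IsTree) (R : GRay G) (k : ℕ) : R.busemann hT (R.f k) = k := by
  obtain ⟨l, hl, hkl⟩ :=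
    ((R.eventually_sub_dist_eq_busemann hT (R.f k)).and (eventually_ge_atTop k)).exists
  rw [← hl, R.dist_f_f hT hkl]
  omega

lemma busemann_le_busemann_add_dist (hT : G.IsTree) (R : GRay G) (z y : V) :
    R.busemann hT y ≤ R.busemann hT z + G.dist z y := by
  obtain ⟨k, hk⟩ := (R.eventually_sub_dist_eq_busemann hT y).exists
  have := R.sub_dist_le_busemann hT z k
  have := hT.connected.dist_triangle (u := z) (v := y) (w := R.f k)
  omega

/-- `y` lies on the geodesic ray from `z` to the end of `R`. -/
def OnRayToEnd (hT : G.IsTree) (R : GRay G) (z y : V) : Prop :=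
  R.busemann hT y = R.busemann hT z + G.dist z y

variable {hT : G.IsTree} {R : GRay G} {w y z : V}

lemma onRayToEnd_iff_eventually : R.OnRayToEnd hT z y ↔
    ∀ᶠ k : ℕ in atTop, G.dist z (R.f k) = G.dist z y + G.dist y (R.f k) := by
  have hz := R.eventually_sub_dist_eq_busemann hT z
  have hy := R.eventually_sub_dist_eq_busemann hT y
  constructor
  · intro h
    filter_upwards [hz, hy] with k hzk hyk
    rw [OnRayToEnd] at h
    omega
  · intro h
    obtain ⟨k, hk, hzk, hyk⟩ := (h.and (hz.and hy)).exists
    rw [OnRayToEnd]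
    omega

lemma eventually_onRayToEnd_f (z : V) : ∀ᶠ k : ℕ in atTop, R.OnRayToEnd hT z (R.f k) := by
  filter_upwards [R.eventually_sub_dist_eq_busemann hT z] with k hk
  rw [OnRayToEnd, busemann_f]
  omega

lemma OnRayToEnd.busemann_le (h : R.OnRayToEnd hT z y) : R.busemann hT z ≤ R.busemann hT y := by
  rw [h]
  omega

lemma OnRayToEnd.trans (h₁ : R.OnRayToEnd hT z y) (h₂ : R.OnRayToEnd hT y w) :
    R.OnRayToEnd hT z w := by
  have := R.busemann_le_busemann_add_dist hT z w
  have := hT.connected.dist_triangle (u := z) (v := y) (w := w)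
  unfold OnRayToEnd at *
  omega

lemma OnRayToEnd.of_dist_eq_add (h : R.OnRayToEnd hT w y)
    (hz : G.dist w y = G.dist w z + G.dist z y) : R.OnRayToEnd hT w z ∧ R.OnRayToEnd hT z y := by
  have := R.busemann_le_busemann_add_dist hT w z
  have := R.busemann_le_busemann_add_dist hT z y
  unfold OnRayToEnd at *
  constructor <;> omega

lemma OnRayToEnd.of_walk (h : R.OnRayToEnd hT w y) (p : G.Walk z w) (hp : y ∉ p.support) :
    R.OnRayToEnd hT z y := by
  rw [onRayToEnd_iff_eventually] at h ⊢
  filter_upwards [h] with k hk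
  have := hT.mem_support_of_dist_eq (p.reverse.append (hT.geodesic z (R.f k))) hk
  rw [Walk.mem_support_append_iff, Walk.support_reverse, List.mem_reverse] at this
  exact hT.mem_support_geodesic_iff.1 (this.resolve_left hp)

lemma OnRayToEnd.iterate {g : V → V} (hg : IsEmb G g) {c : ℤ}
    (hβ : ∀ x, R.busemann hT (g x) = R.busemann hT x + c) (h : R.OnRayToEnd hT z y) :
    ∀ n, R.OnRayToEnd hT (g^[n] z) (g^[n] y)
  | 0 => h
  | n + 1 => by
    have := h.iterate hg hβ n
    rw [OnRayToEnd, Function.iterate_succ_apply', Function.iterate_succ_apply', hβ, hβ,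
      hg.dist_apply hT, this]
    ring

lemma exists_onRayToEnd_of_not_rayEquiv {S : GRay G} (h : ¬ RayEquiv G S R) :
    ∃ x J, ∀ j, J ≤ j → R.OnRayToEnd hT (S.f j) x := by
  simp only [RayEquiv, not_forall, not_exists, not_and, not_not] at h
  obtain ⟨x, hx⟩ := h
  obtain ⟨J, hJ⟩ := S.exists_forall_ge_ne x
  obtain ⟨K, hK⟩ := R.exists_forall_ge_ne x
  refine ⟨x, J, fun j hj => onRayToEnd_iff_eventually.2 ?_⟩
  filter_upwards [eventually_ge_atTop K] with k hk
  exact hT.mem_support_geodesic_iff.1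
    (hx j k (fun i hi => hJ i (by omega)) (fun i hi => hK i (by omega)) _)

lemma exists_onRayToEnd_tail_of_not_rayEquiv {S : GRay G} (h : ¬ RayEquiv G S R) :
    ∃ J, ∀ i j, J ≤ i → i ≤ j → R.OnRayToEnd hT (S.f j) (S.f i) := by
  obtain ⟨x, J, hx⟩ := exists_onRayToEnd_of_not_rayEquiv (hT := hT) h
  obtain ⟨N, hN⟩ := S.exists_dist_f_eq_add hT x
  refine ⟨max J N, fun i j hi hij => ((hx j (by omega)).of_dist_eq_add ?_).1⟩
  rw [G.dist_comm (u := S.f j) (v := x), G.dist_comm (u := S.f i) (v := x),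
    G.dist_comm (u := S.f j) (v := S.f i), hN j (by omega), hN i (by omega), S.dist_f_f hT hij]
  omega

lemma rayEquiv_of_forall_onRayToEnd {S Q : GRay G} {c : ℤ}
    (hQ : ∀ s, R.busemann hT (Q.f s) = c - s)
    (h : ∀ T, ∃ S' : GRay G, RayEquiv G S S' ∧
      ∃ t, T ≤ t ∧ ∃ J, ∀ j, J ≤ j → R.OnRayToEnd hT (S'.f j) (Q.f t)) :
    RayEquiv G S Q := fun v => by
  obtain ⟨S', hSS', t, ht, J, hJ⟩ := h ((c - R.busemann hT v).toNat + 1)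
  have hv : c - t < R.busemann hT v := by
    have := Int.self_le_toNat (c - R.busemann hT v)
    omega
  obtain ⟨m, n, hm, hn, W, hW⟩ := hSS' v
  have hj := hJ (max n J) (le_max_right _ _)
  refine ⟨m, t, hm, fun i hi hQi => ?_, W.append ((S'.seg n (max n J) (le_max_left _ _)).append
    (hT.geodesic _ (Q.f t))), ?_⟩
  · have := hQ i
    rw [hQi] at this
    omega
  simp only [Walk.mem_support_append_iff, not_or]
  refine ⟨hW, fun hseg => ?_, fun hgeo => ?_⟩
  · obtain ⟨i, hi, -, hSi⟩ := (S'.mem_support_seg_iff _).1 hseg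
    exact hn i hi hSi
  · have := (hj.of_dist_eq_add (hT.mem_support_geodesic_iff.1 hgeo)).2.busemann_le
    rw [hQ] at this
    omega

end GRay

section Shift

variable {G : SimpleGraph V}

lemma RayEquiv.exists_f_eq (hT : G.IsTree) {R S : GRay G} (h : RayEquiv G R S) {N n : ℕ}
    (hN : ∀ n, N ≤ n → G.dist (R.f 0) (S.f n) = G.dist (R.f 0) (S.f N) + (n - N))
    (hn : N ≤ n) : ∃ i, R.f i = S.f n := by
  obtain ⟨m, n', -, hn', W, hW⟩ := h (S.f n)
  have hnn' : n < n' := by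
    by_contra! hc
    exact hn' n hc rfl
  have hmem := hT.mem_support_of_dist_eq ((R.seg 0 m (Nat.zero_le m)).append W) (x := S.f n)
    (by rw [hN n' (by omega), hN n hn, S.dist_f_f hT hnn'.le]; omega)
  rcases (Walk.mem_support_append_iff _ _).1 hmem with hseg | hW'
  · obtain ⟨i, -, -, hi⟩ := (R.mem_support_seg_iff _).1 hseg
    exact ⟨i, hi⟩
  · exact absurd hW' hW

lemma RayEquiv.exists_f_add_eq (hT : G.IsTree) {R S : GRay G} (h : RayEquiv G R S) :
    ∃ p q, ∀ t, R.f (p + t) = S.f (q + t) := by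
  obtain ⟨N, hN⟩ := S.exists_dist_f_eq_add hT (R.f 0)
  refine ⟨G.dist (R.f 0) (S.f N), N, fun t => ?_⟩
  obtain ⟨i, hi⟩ := h.exists_f_eq hT hN (Nat.le_add_right N t)
  have hdist := R.dist_f_f hT (Nat.zero_le i)
  rw [hi, hN _ (Nat.le_add_right N t)] at hdist
  rw [show G.dist (R.f 0) (S.f N) + t = i by omega, hi]

lemma FixesEnd.exists_shift (hT : G.IsTree) {g : V → V} (hg : IsEmb G g) {R : GRay G}
    (h : FixesEnd G g R) : ∃ a b, ∀ t, g (R.f (a + t)) = R.f (b + t) :=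
  (h.rayEquiv_map hg).exists_f_add_eq hT

lemma GRay.busemann_apply_of_shift (hT : G.IsTree) (R : GRay G) {g : V → V} (hg : IsEmb G g)
    {a b : ℕ} (hsh : ∀ t, g (R.f (a + t)) = R.f (b + t)) (z : V) :
    R.busemann hT (g z) = R.busemann hT z + ((b : ℤ) - a) := by
  obtain ⟨N₁, h₁⟩ := eventually_atTop.1 (R.eventually_sub_dist_eq_busemann hT (g z))
  obtain ⟨N₂, h₂⟩ := eventually_atTop.1 (R.eventually_sub_dist_eq_busemann hT z)
  have h₁ := h₁ (b + (N₁ + N₂)) (by omega)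
  have h₂ := h₂ (a + (N₁ + N₂)) (by omega)
  rw [← hsh, hg.dist_apply hT] at h₁
  push_cast at h₁ h₂
  omega

end Shift

namespace GRay

variable {G : SimpleGraph V}

/-- If `g (R.f (k + τ)) = R.f k` for `k ≥ b`, then `g^[s]` carries `R.f (k + s * τ)` to `R.f k`,
so `R.axis g b τ s` lies at distance `k - (b + τ) + s` from each `R.f k` with `k ≥ b + τ`: these
vertices form the translation axis of `g`, which leaves `R` at `R.f (b + τ)`. -/
def axis (R : GRay G) (g : V → V) (b τ s : ℕ) : V := g^[s] (R.f (b + τ + s * (τ - 1)))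

variable (R : GRay G) {g : V → V} {b τ : ℕ} (hsh : ∀ t, g (R.f (b + τ + t)) = R.f (b + t))
include hsh

lemma iterate_apply_f_add_mul (n : ℕ) {k : ℕ} (hk : b ≤ k) :
    g^[n] (R.f (k + n * τ)) = R.f k := by
  induction n with
  | zero => simp
  | succ n ih =>
    rw [Function.iterate_succ_apply, show k + (n + 1) * τ = b + τ + (k - b + n * τ) by
      rw [Nat.succ_mul]; omega, hsh, show b + (k - b + n * τ) = k + n * τ by omega, ih]

lemma apply_axis (hτ : 0 < τ) (s : ℕ) : g (R.axis g b τ s) = R.axis g b τ (s + τ) := by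
  have h : R.axis g b τ (s + τ) =
      g^[s + 1] (g^[τ - 1] (R.f (b + τ + s * (τ - 1) + (τ - 1) * τ))) := by
    rw [axis, ← Function.iterate_add_apply, show s + 1 + (τ - 1) = s + τ by omega]
    congr 2
    ring
  rw [h, R.iterate_apply_f_add_mul hsh _ (by omega), Function.iterate_succ_apply', axis]

lemma iterate_axis (hτ : 0 < τ) (s n : ℕ) :
    g^[n] (R.axis g b τ s) = R.axis g b τ (s + n * τ) := by
  induction n with
  | zero => simp
  | succ n ih =>
    rw [Function.iterate_succ_apply', ih, R.apply_axis hsh hτ]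
    congr 1
    ring

lemma adj_axis (hg : IsEmb G g) (hτ : 0 < τ) (s : ℕ) :
    G.Adj (R.axis g b τ s) (R.axis g b τ (s + 1)) := by
  have h : R.axis g b τ (s + 1) = g^[s] (R.f (b + τ - 1 + s * (τ - 1))) := by
    rw [axis, Function.iterate_succ_apply, show b + τ + (s + 1) * (τ - 1) =
      b + τ + (τ - 1 + s * (τ - 1)) by rw [Nat.succ_mul]; omega, hsh]
    congr 2
    omega
  rw [h, axis]
  refine (hg.iterate s).2 _ _ ?_
  convert (R.adj (b + τ - 1 + s * (τ - 1))).symm using 2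
  omega

lemma dist_axis_f (hT : G.IsTree) (hg : IsEmb G g) (hτ : 0 < τ) (s : ℕ) {k : ℕ}
    (hk : b + τ ≤ k) : G.dist (R.axis g b τ s) (R.f k) = k - (b + τ) + s := by
  have hmul := Nat.mul_sub_one s τ
  have hle := Nat.le_mul_of_pos_right s hτ
  rw [axis, ← R.iterate_apply_f_add_mul hsh s (k := k) (by omega),
    (hg.iterate s).dist_apply hT, R.dist_f_f hT (by omega)]
  omega

def axisRay (hT : G.IsTree) (hg : IsEmb G g) (hτ : 0 < τ) : GRay G where
  f := R.axis g b τ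
  inj s t hst := by
    have hs := R.dist_axis_f hsh hT hg hτ s (le_refl (b + τ))
    rw [hst, R.dist_axis_f hsh hT hg hτ t (le_refl (b + τ))] at hs
    omega
  adj := R.adj_axis hsh hg hτ

lemma busemann_axis (hT : G.IsTree) (hg : IsEmb G g) (hτ : 0 < τ) (s : ℕ) :
    R.busemann hT (R.axis g b τ s) = (b : ℤ) + τ - s := by
  obtain ⟨k, hk, hkb⟩ :=
    ((R.eventually_sub_dist_eq_busemann hT _).and (eventually_ge_atTop (b + τ))).exists
  rw [← hk, R.dist_axis_f hsh hT hg hτ s hkb]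
  omega

lemma not_isPeriodicPt (hT : G.IsTree) (hg : IsEmb G g) (hτ : 0 < τ) {p : ℕ} (hp : 0 < p)
    (v : V) : ¬ Function.IsPeriodicPt g p v := by
  intro hv
  set ρ := G.dist v (R.axis g b τ 0)
  set n := p * (2 * ρ + 1)
  have hρ : G.dist v (R.axis g b τ (0 + n * τ)) = ρ := by
    have := (hg.iterate n).dist_apply hT v (R.axis g b τ 0)
    rwa [(hv.mul_const (2 * ρ + 1)).eq, R.iterate_axis hsh hτ] at this
  have hdisp := (R.axisRay hsh hT hg hτ).dist_f_f hT (Nat.zero_le (0 + n * τ))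
  have htri := hT.connected.dist_triangle (u := R.axis g b τ 0) (v := v)
    (w := R.axis g b τ (0 + n * τ))
  have : n ≤ n * τ := Nat.le_mul_of_pos_right n hτ
  have : 2 * ρ + 1 ≤ n := Nat.le_mul_of_pos_left _ hp
  simp only [axisRay] at hdisp
  rw [hdisp, hρ, G.dist_comm] at htri
  omega

lemma not_elliptic (hT : G.IsTree) (hg : IsEmb G g) (hτ : 0 < τ) : ¬ Elliptic G g := by
  rintro (⟨v, hv⟩ | ⟨u, w, -, ⟨hu, -⟩ | ⟨hu, hw⟩⟩)
  · exact R.not_isPeriodicPt hsh hT hg hτ one_pos v hv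
  · exact R.not_isPeriodicPt hsh hT hg hτ one_pos u hu
  · refine R.not_isPeriodicPt hsh hT hg hτ two_pos u ?_
    show g (g u) = u
    rw [hu, hw]

lemma fixesEnd_axisRay (hT : G.IsTree) (hg : IsEmb G g) (hτ : 0 < τ) :
    FixesEnd G g (R.axisRay hsh hT hg hτ) :=
  ⟨(R.axisRay hsh hT hg hτ).map hg, fun _ => rfl, rayEquiv_of_f_add_eq (p := 0) (q := τ)
    fun t => by rw [zero_add, add_comm]; exact R.apply_axis hsh hτ t⟩

lemma not_rayEquiv_axisRay (hT : G.IsTree) (hg : IsEmb G g) (hτ : 0 < τ) :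
    ¬ RayEquiv G (R.axisRay hsh hT hg hτ) R := fun h => by
  have h₀ : R.axis g b τ 0 = R.f (b + τ) := by simp [axis]
  obtain ⟨m, n, hm, hn, W, hW⟩ := h (R.axis g b τ 0)
  have hm : 0 < m := Nat.pos_of_ne_zero fun h => hm 0 h.le rfl
  have hn : b + τ < n := by
    by_contra! h
    exact hn (b + τ) h h₀.symm
  refine hW (hT.mem_support_of_dist_eq W ?_)
  have := (R.axisRay hsh hT hg hτ).dist_f_f hT (Nat.zero_le m)
  simp only [axisRay] at this ⊢
  rw [R.dist_axis_f hsh hT hg hτ m hn.le, G.dist_comm, this, h₀, R.dist_f_f hT hn.le]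
  omega

lemma rayEquiv_axisRay_of_fixesEnd (hT : G.IsTree) (hg : IsEmb G g) (hτ : 0 < τ) {S : GRay G}
    (hS : FixesEnd G g S) (hSR : ¬ RayEquiv G S R) : RayEquiv G S (R.axisRay hsh hT hg hτ) := by
  obtain ⟨x, J, hx⟩ := exists_onRayToEnd_of_not_rayEquiv (hT := hT) hSR
  obtain ⟨K, hK⟩ := eventually_atTop.1 (R.eventually_onRayToEnd_f (hT := hT) x)
  have hβ := R.busemann_apply_of_shift hT hg hsh
  refine rayEquiv_of_forall_onRayToEnd (R.busemann_axis hsh hT hg hτ) fun T =>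
    ⟨S.map (hg.iterate (T + K)), hS.rayEquiv_map_iterate hg _, T * τ,
      Nat.le_mul_of_pos_right T hτ, J, fun j hj => ?_⟩
  have hK' : g^[T + K] (R.f (b + τ + K * τ)) = R.axis g b τ (T * τ) := by
    rw [Function.iterate_add_apply, R.iterate_apply_f_add_mul hsh K (by omega),
      show R.f (b + τ) = R.axis g b τ 0 by simp [axis], R.iterate_axis hsh hτ, zero_add]
  have := ((hx j hj).trans (hK (b + τ + K * τ) (by nlinarith))).iterate hg hβ (T + K)
  rw [hK'] at this
  exact this

theorem hyperbolic_of_shift (hT : G.IsTree) (hg : IsEmb G g) (hτ : 0 < τ) : Hyperbolic G g :=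
  ⟨R.not_elliptic hsh hT hg hτ, R.axisRay hsh hT hg hτ, R, R.not_rayEquiv_axisRay hsh hT hg hτ,
    R.fixesEnd_axisRay hsh hT hg hτ, ⟨R.map hg, fun _ => rfl, rayEquiv_of_f_add_eq hsh⟩,
    fun S hS => (em (RayEquiv G S R)).elim Or.inr
      fun h => Or.inl (R.rayEquiv_axisRay_of_fixesEnd hsh hT hg hτ hS h)⟩

end GRay

section Main

variable {G : SimpleGraph V}

lemma FixesEnd.le_busemann_apply_or_hyperbolic (hT : G.IsTree) {g : V → V} (hg : IsEmb G g)
    {R : GRay G} (h : FixesEnd G g R) :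
    (∀ z, R.busemann hT z ≤ R.busemann hT (g z)) ∨ Hyperbolic G g := by
  obtain ⟨a, b, hsh⟩ := h.exists_shift hT hg
  rcases le_or_gt a b with hab | hba
  · refine Or.inl fun z => ?_
    rw [R.busemann_apply_of_shift hT hg hsh]
    omega
  · obtain ⟨τ, rfl⟩ := Nat.exists_eq_add_of_le hba.le
    exact Or.inr (R.hyperbolic_of_shift hsh hT hg (by omega))

lemma not_inLimitSet_of_forall_busemann_le (hT : G.IsTree) {M : Set (V → V)} {R S : GRay G}
    (v₀ : V) (hM : ∀ g ∈ M, ∀ z, R.busemann hT z ≤ R.busemann hT (g z))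
    (hSR : ¬ RayEquiv G S R) : ¬ InLimitSet G M v₀ S := by
  intro hS
  obtain ⟨J, hJ⟩ := GRay.exists_onRayToEnd_tail_of_not_rayEquiv (hT := hT) hSR
  set N := J + ((R.busemann hT (S.f J) - R.busemann hT v₀).toNat + 1)
  have hN : R.busemann hT (S.f N) < R.busemann hT v₀ := by
    have := hJ J N le_rfl (by omega)
    rw [GRay.OnRayToEnd, G.dist_comm, S.dist_f_f hT (by omega)] at this
    have := Int.self_le_toNat (R.busemann hT (S.f J) - R.busemann hT v₀)
    omega
  obtain ⟨g, hg, m, hm, p, hp⟩ := hS (S.f N)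
  have hNm : N < m := by
    by_contra! h
    exact hm N h rfl
  have := ((hJ N m (by omega) hNm.le).of_walk p hp).busemann_le
  have := hM g hg v₀
  omega

end Main

theorem stmt15 (G : SimpleGraph V) (hT : G.IsTree) (M : Set (V → V))
    (hM : IsEmbMonoid G M) (v0 : V)
    (h2 : ∃ R1 R2 : GRay G, InLimitSet G M v0 R1 ∧ InLimitSet G M v0 R2 ∧ ¬ RayEquiv G R1 R2)
    (hfix : ∃ R0 : GRay G, ∀ g ∈ M, FixesEnd G g R0) :
    ∃ g ∈ M, Hyperbolic G g := by
  obtain ⟨R0, hR0⟩ := hfix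
  obtain ⟨R1, R2, hR1, hR2, h12⟩ := h2
  obtain ⟨R, hR, hRR0⟩ : ∃ R, InLimitSet G M v0 R ∧ ¬ RayEquiv G R R0 := by
    by_cases h1 : RayEquiv G R1 R0
    · exact ⟨R2, hR2, fun h2 => h12 (h1.trans h2.symm)⟩
    · exact ⟨R1, hR1, h1⟩
  by_contra! hnone
  refine not_inLimitSet_of_forall_busemann_le hT v0 (fun g hg => ?_) hRR0 hR
  exact ((hR0 g hg).le_busemann_apply_or_hyperbolic hT (hM.1 g hg)).resolve_right (hnone g hg)
end
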